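/- Let Φ be a finite root system in a finite-dimensional real inner product space E with a fixed simple system Δ = {α₁,…,α_r}, and let χ₁,…,χ_r be the fundamental weights, defined by 2(χ_i,α_j)/(α_j,α_j) = δ_{ij}. Then for every i = 1,…,r there exists a real number d_i > 0 such that χ_i = d_i · Σ_{β ∈ Φ, β ≥ α_i} β, where β ≥ α_i means that β − α_i is a nonnegative linear combination of the simple roots α₁,…,α_r. -/

import Mathlib

open scoped RealInnerProductSpace

/-- The reflection `s_β` in the root `β`: `s_β(χ) = χ − (2(χ,β)/(β,β))·β`. -/
noncomputable def sRefl {E : Type*} [NormedAddCommGroup E] [InnerProductSpace ℝ E]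
    (β χ : E) : E :=
  χ - (2 * ⟪χ, β⟫ / ⟪β, β⟫) • β

/-- `Φ` is a finite root system in `E`: a finite set of nonzero vectors spanning `E` such
that for all `α, β ∈ Φ` the reflection `s_α(β)` lies in `Φ`. -/
def IsRootSystem {E : Type*} [NormedAddCommGroup E] [InnerProductSpace ℝ E]
    (Φ : Finset E) : Prop :=
  (∀ β ∈ Φ, β ≠ 0) ∧ Submodule.span ℝ (Φ : Set E) = ⊤ ∧
    ∀ α ∈ Φ, ∀ β ∈ Φ, sRefl α β ∈ Φ

/-- `α : Fin r → E` is a simple system for `Φ`: a basis of `E` consisting of roots such that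
every root is a linear combination of the `α i` with coefficients all nonnegative or all
nonpositive. -/
def IsSimpleSystem {E : Type*} [NormedAddCommGroup E] [InnerProductSpace ℝ E]
    (Φ : Finset E) {r : ℕ} (α : Fin r → E) : Prop :=
  (∀ i, α i ∈ Φ) ∧ LinearIndependent ℝ α ∧ Submodule.span ℝ (Set.range α) = ⊤ ∧
    ∀ β ∈ Φ, ∃ c : Fin r → ℝ, β = ∑ i, c i • α i ∧ ((∀ i, 0 ≤ c i) ∨ (∀ i, c i ≤ 0))

/-- `β ≥ β'` with respect to the simple system `α`: `β − β'` is a nonnegative linear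
combination of the simple roots. -/
def rootGE {E : Type*} [NormedAddCommGroup E] [InnerProductSpace ℝ E]
    {r : ℕ} (α : Fin r → E) (β β' : E) : Prop :=
  ∃ c : Fin r → ℝ, (∀ i, 0 ≤ c i) ∧ β - β' = ∑ i, c i • α i

section Aux
variable {E : Type*} [NormedAddCommGroup E] [InnerProductSpace ℝ E]

lemma sRefl_sRefl {b : E} (hb : b ≠ 0) (x : E) : sRefl b (sRefl b x) = x := by
  have hbb : (⟪b, b⟫ : ℝ) ≠ 0 := inner_self_ne_zero.mpr hb
  simp only [sRefl, inner_sub_left, real_inner_smul_left]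
  rw [sub_sub, ← add_smul]
  have h : (2 * ⟪x, b⟫ / ⟪b, b⟫ + 2 * (⟪x, b⟫ - 2 * ⟪x, b⟫ / ⟪b, b⟫ * ⟪b, b⟫) / ⟪b, b⟫) = 0 := by
    field_simp; ring
  rw [h, zero_smul, sub_zero]

lemma sum_sRefl (b : E) (T : Finset E) :
    ∑ β ∈ T, sRefl b β = (∑ β ∈ T, β) - (2 * ⟪∑ β ∈ T, β, b⟫ / ⟪b, b⟫) • b := by
  simp only [sRefl, Finset.sum_sub_distrib]
  congr 1
  rw [← Finset.sum_smul, sum_inner]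
  congr 1
  rw [Finset.mul_sum, Finset.sum_div]

end Aux

open scoped Classical in
/-- **Lemma 5.1 of the paper.** Let `Φ` be a finite root system with simple system
`α₁,…,α_r` and fundamental weights `χ₁,…,χ_r` (defined by `2(χᵢ,αⱼ)/(αⱼ,αⱼ) = δᵢⱼ`).
Then for every `i` there is a real `dᵢ > 0` with `χᵢ = dᵢ · ∑_{β ∈ Φ, β ≥ αᵢ} β`. -/
theorem fundamental_weight_eq_pos_smul_sum_of_roots_ge
    {E : Type*} [NormedAddCommGroup E] [InnerProductSpace ℝ E] [FiniteDimensional ℝ E]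
    (Φ : Finset E) (hΦ : IsRootSystem Φ)
    {r : ℕ} (α : Fin r → E) (hα : IsSimpleSystem Φ α)
    (χ : Fin r → E)
    (hχ : ∀ i j, 2 * ⟪χ i, α j⟫ / ⟪α j, α j⟫ = if i = j then (1 : ℝ) else 0) :
    ∀ i, ∃ d : ℝ, 0 < d ∧
      χ i = d • ∑ β ∈ Φ.filter (fun β => rootGE α β (α i)), β := by
  obtain ⟨hΦ0, hΦspan, hΦrefl⟩ := hΦ
  obtain ⟨hαΦ, hli, hspan, hsign⟩ := hα
  intro i
  -- the basis of simple roots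
  let B : Module.Basis (Fin r) ℝ E := Module.Basis.mk hli (by rw [hspan])
  have hB : ∀ k, B k = α k := fun k => Module.Basis.mk_apply hli _ k
  have hα0 : ∀ k, α k ≠ 0 := fun k => hΦ0 _ (hαΦ k)
  have hαα : ∀ k, (⟪α k, α k⟫ : ℝ) ≠ 0 := fun k => inner_self_ne_zero.mpr (hα0 k)
  -- characterization of rootGE via coordinates
  have hGE : ∀ β : E, rootGE α β (α i) ↔ ∀ k, 0 ≤ B.repr (β - α i) k := by
    intro β
    constructor
    · rintro ⟨c, hc, hcs⟩ k
      have : β - α i = ∑ j, c j • B j := by rw [hcs]; simp_rw [hB]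
      rw [this, B.repr_sum_self]
      exact hc k
    · intro h
      refine ⟨fun k => B.repr (β - α i) k, h, ?_⟩
      conv_lhs => rw [← B.sum_repr (β - α i)]
      simp_rw [hB]
  -- nonneg coordinates for roots with a positive coordinate
  have hpos_of_root : ∀ β ∈ Φ, ∀ k₀, 0 < B.repr β k₀ → ∀ k, 0 ≤ B.repr β k := by
    intro β hβ k₀ hk₀ k
    obtain ⟨c, hcs, hc⟩ := hsign β hβ
    have hrepr : ∀ m, B.repr β m = c m := by
      intro m
      have : β = ∑ j, c j • B j := by rw [hcs]; simp_rw [hB]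
      rw [this, B.repr_sum_self]
    rcases hc with hc | hc
    · rw [hrepr]; exact hc k
    · exfalso; rw [hrepr] at hk₀; exact absurd (hc k₀) (not_le.mpr hk₀)
  have hrepr_αi : ∀ k, B.repr (α i) k = if i = k then 1 else 0 := by
    intro k
    rw [← hB i, B.repr_self]
    simp [Finsupp.single_apply]
  set T := Φ.filter (fun β => rootGE α β (α i)) with hT
  have hαiT : α i ∈ T := by
    rw [hT, Finset.mem_filter]
    exact ⟨hαΦ i, ⟨fun _ => 0, fun _ => le_rfl, by simp⟩⟩
  set S := ∑ β ∈ T, β with hS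
  have hsub : ∀ (x y : E) (k : Fin r), B.repr (x - y) k = B.repr x k - B.repr y k := by
    intro x y k; rw [map_sub]; simp
  -- stability of T under simple reflections s_j, j ≠ i
  have hstab : ∀ j, j ≠ i → ∀ β ∈ T, sRefl (α j) β ∈ T := by
    intro j hj β hβ
    rw [hT, Finset.mem_filter] at hβ ⊢
    obtain ⟨hβΦ, hβGE⟩ := hβ
    have hc := (hGE β).mp hβGE
    have hβ'Φ : sRefl (α j) β ∈ Φ := hΦrefl _ (hαΦ j) _ hβΦ
    have hβ' : sRefl (α j) β = β - (2 * ⟪β, α j⟫ / ⟪α j, α j⟫) • α j := rfl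
    have hki : B.repr (sRefl (α j) β) i = B.repr β i := by
      rw [hβ', hsub, map_smul, ← hB j, B.repr_self]
      simp [Finsupp.single_apply, hj]
    have hβi : B.repr β i = B.repr (β - α i) i + 1 := by
      rw [hsub, hrepr_αi, if_pos rfl]; ring
    have hβ'pos : 0 < B.repr (sRefl (α j) β) i := by
      rw [hki, hβi]; have := hc i; linarith
    have hβ'nonneg := hpos_of_root _ hβ'Φ i hβ'pos
    refine ⟨hβ'Φ, (hGE _).mpr ?_⟩
    intro k
    rw [hsub, hrepr_αi]
    by_cases hik : i = k
    · subst hik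
      rw [if_pos rfl, hki, hβi]
      have := hc i; linarith
    · rw [if_neg hik, sub_zero]; exact hβ'nonneg k
  -- S is orthogonal to α j for j ≠ i
  have horth : ∀ j, j ≠ i → (⟪S, α j⟫ : ℝ) = 0 := by
    intro j hj
    have hbij : ∑ β ∈ T, sRefl (α j) β = ∑ β ∈ T, β := by
      refine Finset.sum_nbij' (i := fun β => sRefl (α j) β) (j := fun β => sRefl (α j) β)
        (hstab j hj) (hstab j hj)
        (fun β _ => sRefl_sRefl (hα0 j) β) (fun β _ => sRefl_sRefl (hα0 j) β)
        (fun β _ => rfl)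
    have heq := sum_sRefl (α j) T
    rw [hbij, ← hS] at heq
    have h0 : (2 * ⟪S, α j⟫ / ⟪α j, α j⟫) • α j = 0 := sub_eq_self.mp heq.symm
    rcases smul_eq_zero.mp h0 with h | h
    · have hne := hαα j
      field_simp at h
      linarith
    · exact absurd h (hα0 j)
  -- facts about the fundamental weight χ i
  have hχ0 : ∀ j, j ≠ i → (⟪χ i, α j⟫ : ℝ) = 0 := by
    intro j hj
    have h := hχ i j
    rw [if_neg (Ne.symm hj)] at h
    have hne := hαα j
    field_simp at h
    linarith
  have hχi : (⟪χ i, α i⟫ : ℝ) = ⟪α i, α i⟫ / 2 := by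
    have h := hχ i i
    rw [if_pos rfl] at h
    have hne := hαα i
    field_simp at h
    linarith
  -- S is a positive multiple of χ i
  set t : ℝ := 2 * ⟪S, α i⟫ / ⟪α i, α i⟫ with ht
  have hSt : S = t • χ i := by
    have hv : ∀ j, (⟪S - t • χ i, α j⟫ : ℝ) = 0 := by
      intro j
      rw [inner_sub_left, real_inner_smul_left]
      by_cases hj : j = i
      · subst hj
        rw [hχi, ht]
        have hne := hαα j
        field_simp
        ring
      · rw [horth j hj, hχ0 j hj, mul_zero, sub_zero]
    have hall : ∀ x : E, (⟪x, S - t • χ i⟫ : ℝ) = 0 := by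
      intro x
      have hx : x ∈ Submodule.span ℝ (Set.range α) := by rw [hspan]; trivial
      induction hx using Submodule.span_induction with
      | mem y hy => obtain ⟨j, rfl⟩ := hy; rw [real_inner_comm]; exact hv j
      | zero => simp
      | add y z _ _ hy hz => rw [inner_add_left, hy, hz, add_zero]
      | smul c y _ hy => rw [real_inner_smul_left, hy, mul_zero]
    have h0 : S - t • χ i = 0 := inner_self_eq_zero.mp (hall (S - t • χ i))
    exact sub_eq_zero.mp h0
  have ha : (0:ℝ) ≤ ⟪α i, α i⟫ := real_inner_self_nonneg
  have hapos : (0:ℝ) < ⟪α i, α i⟫ := lt_of_le_of_ne ha (Ne.symm (hαα i))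
  -- each root in T pairs positively with χ i
  have hβχ : ∀ β ∈ T, (⟪α i, α i⟫ : ℝ)/2 ≤ ⟪β, χ i⟫ := by
    intro β hβ
    rw [hT, Finset.mem_filter] at hβ
    obtain ⟨hβΦ, c, hc, hcs⟩ := hβ
    have hsum : (⟪β - α i, χ i⟫ : ℝ) = c i * (⟪α i, α i⟫/2) := by
      rw [hcs, sum_inner]
      rw [Finset.sum_eq_single i]
      · rw [real_inner_smul_left, real_inner_comm, hχi]
      · intro k _ hk
        rw [real_inner_smul_left, real_inner_comm, hχ0 k hk, mul_zero]
      · intro h; exact absurd (Finset.mem_univ i) h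
    have h2 : (⟪β, χ i⟫ : ℝ) = ⟪β - α i, χ i⟫ + ⟪α i, χ i⟫ := by
      rw [inner_sub_left]; ring
    have hi2 : (⟪α i, χ i⟫ : ℝ) = ⟪α i, α i⟫/2 := by rw [real_inner_comm]; exact hχi
    have hci := hc i
    rw [h2, hsum, hi2]
    nlinarith
  have hSχ : (0:ℝ) < ⟪S, χ i⟫ := by
    rw [hS, sum_inner]
    refine Finset.sum_pos (fun β hβ => lt_of_lt_of_le (by linarith) (hβχ β hβ)) ⟨α i, hαiT⟩
  have htpos : 0 < t := by
    have hmul : (⟪S, χ i⟫ : ℝ) = t * ⟪χ i, χ i⟫ := by rw [hSt, real_inner_smul_left]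
    have hχχ : (0:ℝ) ≤ ⟪χ i, χ i⟫ := real_inner_self_nonneg
    nlinarith
  refine ⟨t⁻¹, inv_pos.mpr htpos, ?_⟩
  rw [hSt, smul_smul, inv_mul_cancel₀ (ne_of_gt htpos), one_smul]
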